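/- For any 0 < m < k ≤ n and any z ∈ ℂ_+, the difference ν_{n,k}(P_z) − ν_{n,k−1}(P_z) is equal in distribution to 2^{−(n−k)} Σ_{j=1}^{2^{n−k}} ( ν_k^{(j)}(P_z) − ν_{k,k−1}^{(j)}(P_z) ), where for j = 1,…,2^{n−k} the pairs (ν_k^{(j)}, ν_{k,k−1}^{(j)}) are independent and each is distributed as the pair of finite-volume density of states measures (ν_k, ν_{k,k−1}) of an independent copy of (H_k, H_{k,k−1}). -/

import Mathlib

open MeasureTheory ProbabilityTheory Filter
open scoped BigOperators ENNReal NNReal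

noncomputable section

instance matrixMeasurableSpace {m n α : Type*} [MeasurableSpace α] :
    MeasurableSpace (Matrix m n α) :=
  (inferInstance : MeasurableSpace (m → n → α))

/-- Hierarchical (ultrametric) distance on `ℕ` (`0`-indexed): the least `r` such that `x` and
`y` lie in a common block of the partition into consecutive blocks of size `2 ^ r`. -/
def hdist (x y : ℕ) : ℕ := sInf {r | x / 2 ^ r = y / 2 ^ r}

/-- The variance of the `(x, y)` entry of the hierarchical Gaussian matrix `Φ_{n,r}`. -/
def entryVar (r x y : ℕ) : ℝ≥0 :=
  if hdist x y = 0 then 2 * (2 : ℝ≥0)⁻¹ ^ r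
  else if hdist x y ≤ r then (2 : ℝ≥0)⁻¹ ^ r
  else 0

/-- The family `Φ_{n,r}`, `0 ≤ r ≤ n`, of independent hierarchical GOE-block matrices:
symmetric random matrices on `ℓ²(B_n)`, `B_n = {1, …, 2^n}`, whose entries are independent
(up to symmetry) centered real Gaussians with variance `entryVar r x y` (in particular the
entries with `hdist x y > r` vanish identically). -/
structure UltrametricField (Ω : Type*) [MeasureSpace Ω] where
  Φ : (n : ℕ) → (r : ℕ) → Ω → Matrix (Fin (2 ^ n)) (Fin (2 ^ n)) ℝ
  meas : ∀ n r (x y : Fin (2 ^ n)), Measurable fun ω => Φ n r ω x y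
  herm : ∀ n r ω, (Φ n r ω).IsHermitian
  zero : ∀ n r ω (x y : Fin (2 ^ n)), r < hdist (x : ℕ) (y : ℕ) → Φ n r ω x y = 0
  gauss : ∀ n r, r ≤ n → ∀ x y : Fin (2 ^ n),
    Measure.map (fun ω => Φ n r ω x y) ℙ = gaussianReal 0 (entryVar r (x : ℕ) (y : ℕ))
  indep : ∀ n : ℕ,
    iIndepFun
      (fun p : {p : ℕ × Fin (2 ^ n) × Fin (2 ^ n) // p.1 ≤ n ∧ (p.2.1 : ℕ) ≤ (p.2.2 : ℕ)} =>
        fun ω => Φ n p.1.1 ω p.1.2.1 p.1.2.2) ℙ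

namespace UltrametricField

variable {Ω : Type*} [MeasureSpace Ω] (F : UltrametricField Ω)

/-- The truncated Hamiltonian `H_{n,m} = ∑_{r=0}^m 2^{-(1+c)r/2} Φ_{n,r}`
(normalization constant omitted, as appropriate for `c > 0`). -/
def Htrunc (c : ℝ) (n m : ℕ) (ω : Ω) : Matrix (Fin (2 ^ n)) (Fin (2 ^ n)) ℝ :=
  ∑ r ∈ Finset.range (m + 1), ((2 : ℝ) ^ (-((1 + c) / 2) * (r : ℝ))) • F.Φ n r ω

/-- The ultrametric ensemble `H_n = ∑_{r=0}^n 2^{-(1+c)r/2} Φ_{n,r}`. -/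
def H (c : ℝ) (n : ℕ) : Ω → Matrix (Fin (2 ^ n)) (Fin (2 ^ n)) ℝ := F.Htrunc c n n

lemma isHermitian_Htrunc (c : ℝ) (n m : ℕ) (ω : Ω) : (F.Htrunc c n m ω).IsHermitian := by
  unfold Htrunc Matrix.IsHermitian
  rw [Matrix.conjTranspose_sum]
  refine Finset.sum_congr rfl fun r _ => ?_
  rw [Matrix.conjTranspose_smul]
  have h := F.herm n r ω
  unfold Matrix.IsHermitian at h
  rw [h]
  norm_num

lemma isHermitian_H (c : ℝ) (n : ℕ) (ω : Ω) : (F.H c n ω).IsHermitian :=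
  F.isHermitian_Htrunc c n n ω

/-- The eigenvalues of the truncated Hamiltonian `H_{n,m}`. -/
def eigTrunc (c : ℝ) (n m : ℕ) (ω : Ω) : Fin (2 ^ n) → ℝ :=
  (F.isHermitian_Htrunc c n m ω).eigenvalues

/-- The eigenvalues of `H_n`. -/
def eig (c : ℝ) (n : ℕ) (ω : Ω) : Fin (2 ^ n) → ℝ := F.eigTrunc c n n ω

/-- The `ℓ²`-normalized eigenfunctions of `H_n`. -/
def eigvec (c : ℝ) (n : ℕ) (ω : Ω) (i : Fin (2 ^ n)) : EuclideanSpace ℝ (Fin (2 ^ n)) :=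
  (F.isHermitian_H c n ω).eigenvectorBasis i

/-- The finite-volume density of states measure applied to `f`:
`ν_{n,m}(f) = 2^{-n} Tr f(H_{n,m})`. -/
def nuTrunc (c : ℝ) (n m : ℕ) (f : ℝ → ℝ) (ω : Ω) : ℝ :=
  (2 ^ n : ℝ)⁻¹ * ∑ i, f (F.eigTrunc c n m ω i)

/-- `ν_n(f) = 2^{-n} Tr f(H_n)`. -/
def nu (c : ℝ) (n : ℕ) (f : ℝ → ℝ) (ω : Ω) : ℝ := F.nuTrunc c n n f ω

/-- The rescaled eigenvalue process of the truncation: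
`μ_{n,m}(f) = ∑_{λ ∈ σ(H_{n,m})} f(2^n (λ - E))`. -/
def muTrunc (c E : ℝ) (n m : ℕ) (f : ℝ → ℝ) (ω : Ω) : ℝ :=
  ∑ i, f ((2 ^ n : ℝ) * (F.eigTrunc c n m ω i - E))

/-- The rescaled eigenvalue process `μ_n(f) = ∑_{λ ∈ σ(H_n)} f(2^n (λ - E))`. -/
def mu (c E : ℝ) (n : ℕ) (f : ℝ → ℝ) (ω : Ω) : ℝ := F.muTrunc c E n n f ω

/-- The number of rescaled eigenvalues of `H_{n,m}` in `B`, i.e. `μ_{n,m}(1_B)`. -/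
def muCount (c E : ℝ) (n m : ℕ) (B : Set ℝ) (ω : Ω) : ℕ :=
  ∑ i, Set.indicator B (fun _ => 1) ((2 ^ n : ℝ) * (F.eigTrunc c n m ω i - E))

/-- The index embedding of the `j`-th block of size `2 ^ k` into `B_n`. -/
def blockIdx {n k : ℕ} (hkn : k ≤ n) (j : Fin (2 ^ (n - k))) (a : Fin (2 ^ k)) : Fin (2 ^ n) :=
  ⟨(j : ℕ) * 2 ^ k + (a : ℕ), by
    have h1 : (j : ℕ) + 1 ≤ 2 ^ (n - k) := j.isLt
    have h2 : ((j : ℕ) + 1) * 2 ^ k ≤ 2 ^ (n - k) * 2 ^ k := Nat.mul_le_mul_right _ h1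
    have h3 : 2 ^ (n - k) * 2 ^ k = 2 ^ n := by rw [← pow_add]; congr 1; omega
    have h4 : ((j : ℕ) + 1) * 2 ^ k = (j : ℕ) * 2 ^ k + 2 ^ k := by ring
    have h5 : (a : ℕ) < 2 ^ k := a.isLt
    omega⟩

/-- The `j`-th diagonal block (at scale `k`) of the truncated Hamiltonian `H_{n,m}`. -/
def blockMat (c : ℝ) {n k : ℕ} (hkn : k ≤ n) (m : ℕ) (j : Fin (2 ^ (n - k))) (ω : Ω) :
    Matrix (Fin (2 ^ k)) (Fin (2 ^ k)) ℝ :=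
  (F.Htrunc c n m ω).submatrix (blockIdx hkn j) (blockIdx hkn j)

lemma isHermitian_blockMat (c : ℝ) {n k : ℕ} (hkn : k ≤ n) (m : ℕ) (j : Fin (2 ^ (n - k)))
    (ω : Ω) : (F.blockMat c hkn m j ω).IsHermitian :=
  (F.isHermitian_Htrunc c n m ω).submatrix _

/-- The eigenvalues of the `j`-th block of `H_{n,m}`. -/
def blockEig (c : ℝ) {n k : ℕ} (hkn : k ≤ n) (m : ℕ) (j : Fin (2 ^ (n - k))) (ω : Ω) :
    Fin (2 ^ k) → ℝ :=
  (F.isHermitian_blockMat c hkn m j ω).eigenvalues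

/-- The number of rescaled eigenvalues of the `j`-th block of `H_{n,m}` lying in `B`,
i.e. `μ_{k,j}(1_B)` where `μ_{k,j}(f) = ∑_{λ ∈ σ(H^{(j)}_{k,m})} f(2^n (λ - E))`. -/
def blockCount (c E : ℝ) {n k : ℕ} (hkn : k ≤ n) (m : ℕ) (j : Fin (2 ^ (n - k))) (ω : Ω)
    (B : Set ℝ) : ℕ :=
  ∑ i, Set.indicator B (fun _ => 1) ((2 ^ n : ℝ) * (F.blockEig c hkn m j ω i - E))

/-- The Green function `G_{n,m}(x,y;z) = ⟨δ_y, (H_{n,m} - z)^{-1} δ_x⟩`. -/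
def Green (c : ℝ) (n m : ℕ) (z : ℂ) (ω : Ω) (x y : Fin (2 ^ n)) : ℂ :=
  ((F.Htrunc c n m ω).map (fun a => (a : ℂ)) - z • (1 : Matrix (Fin (2 ^ n)) (Fin (2 ^ n)) ℂ))⁻¹ x y

/-- The eigenfunction correlator `Q_n(x,y;W) = ∑_{λ ∈ σ(H_n) ∩ W} |ψ_λ(x) ψ_λ(y)|`. -/
def Qcorr (c : ℝ) (n : ℕ) (ω : Ω) (x y : Fin (2 ^ n)) (W : Set ℝ) : ℝ :=
  ∑ i, Set.indicator W (fun _ => |F.eigvec c n ω i x * F.eigvec c n ω i y|) (F.eig c n ω i)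

end UltrametricField

/-- The square `Z_{n,c}²` of the normalizing constant:
`Z_{n,c}² = ∑_{r=0}^n 2^{-(1+c)r} (1 + 2^{-r})`. -/
def Zsq (c : ℝ) (n : ℕ) : ℝ :=
  ∑ r ∈ Finset.range (n + 1), (2 : ℝ) ^ (-(1 + c) * (r : ℝ)) * (1 + (2 : ℝ) ^ (-(r : ℝ)))

namespace UltrametricField

variable {Ω : Type*} [MeasureSpace Ω] (F : UltrametricField Ω)

/-- The normalized ultrametric ensemble `Z_{n,c}^{-1} ∑_{r=0}^n 2^{-(1+c)r/2} Φ_{n,r}`. -/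
def Hnorm (c : ℝ) (n : ℕ) (ω : Ω) : Matrix (Fin (2 ^ n)) (Fin (2 ^ n)) ℝ :=
  (Real.sqrt (Zsq c n))⁻¹ • F.H c n ω

lemma isHermitian_Hnorm (c : ℝ) (n : ℕ) (ω : Ω) : (F.Hnorm c n ω).IsHermitian := by
  unfold Hnorm Matrix.IsHermitian
  rw [Matrix.conjTranspose_smul]
  have h := F.isHermitian_H c n ω
  unfold Matrix.IsHermitian at h
  rw [h]
  norm_num

/-- The eigenvalues of the normalized ultrametric ensemble. -/
def eigNorm (c : ℝ) (n : ℕ) (ω : Ω) : Fin (2 ^ n) → ℝ :=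
  (F.isHermitian_Hnorm c n ω).eigenvalues

/-- The `ℓ²`-normalized eigenfunctions of the normalized ultrametric ensemble. -/
def eigvecNorm (c : ℝ) (n : ℕ) (ω : Ω) (i : Fin (2 ^ n)) : EuclideanSpace ℝ (Fin (2 ^ n)) :=
  (F.isHermitian_Hnorm c n ω).eigenvectorBasis i

/-- The spread `M_n = (max_{x,y} E|⟨δ_y, H_n δ_x⟩|²)^{-1}` of the normalized ensemble. -/
def spread (c : ℝ) (n : ℕ) : ℝ :=
  (⨆ x : Fin (2 ^ n), ⨆ y : Fin (2 ^ n), ∫ ω, (F.Hnorm c n ω x y) ^ 2 ∂ℙ)⁻¹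

/-- The eigenvalues of the GOE matrix `Φ_{n,n}` of size `2^n`. -/
def eigGOE (n : ℕ) (ω : Ω) : Fin (2 ^ n) → ℝ := (F.herm n n ω).eigenvalues

end UltrametricField

/-- The rescaled Poisson kernel `P_z(λ) = Im (λ - z)^{-1}`. -/
def Pker (z : ℂ) (l : ℝ) : ℝ := z.im / ((l - z.re) ^ 2 + z.im ^ 2)

/-- `E` is a Lebesgue point of `g`. -/
def LebesguePoint (g : ℝ → ℝ) (E : ℝ) : Prop :=
  Tendsto (fun r : ℝ => (2 * r)⁻¹ * ∫ l in Set.Icc (E - r) (E + r), |g l - g E|)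
    (nhdsWithin 0 (Set.Ioi 0)) (nhds 0)

/-- `g` is the (bounded) density of the infinite-volume density of states measure `ν`,
defined by `ν(f) = lim_{n → ∞} 2^{-n} ∑_{λ ∈ σ(H_n)} f(λ)`. -/
def UltrametricField.IsDOSDensity {Ω : Type*} [MeasureSpace Ω] (F : UltrametricField Ω)
    (c : ℝ) (g : ℝ → ℝ) : Prop :=
  Measurable g ∧ (∀ l, 0 ≤ g l) ∧ (∃ K, ∀ l, g l ≤ K) ∧
    ∀ f : ℝ → ℝ, Continuous f → HasCompactSupport f →
      Tendsto (fun n => ∫ ω, F.nu c n f ω ∂ℙ) atTop (nhds (∫ l, f l * g l))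

/-- The density of the semicircle law, `ρ_sc(E) = √((4 - E²)₊) / (2π)`. -/
def rhoSC (E : ℝ) : ℝ := Real.sqrt (max (4 - E ^ 2) 0) / (2 * Real.pi)

end


/-!
For `m ≤ k` every coupling `Φ_{n,r}`, `r ≤ m`, vanishes between distinct blocks of size `2^k`,
so after relabelling `B_n ≃ B_k × {blocks}` the matrix `H_{n,m}` is block diagonal. Its
characteristic polynomial is then the product of those of the blocks, so its spectrum (with
multiplicity) is the union of theirs, and `ν_{n,m}` is the average of the blocks' densities of
states.

The `j`-th blocks of `H_{n,k}` and `H_{n,k-1}` are one fixed function of the vector of entries of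
`Φ_{n,r}`, `r ≤ k`, inside block `j`. These vectors use disjoint sets of independent entries, so
they are independent; and since the hierarchical distance is invariant under translation by whole
blocks, each has the same Gaussian product law as the entry vector of `(Φ_{k,r})_{r ≤ k}`, which
determines `(H_k, H_{k,k-1})` through the same function.
-/

open Matrix MeasureTheory ProbabilityTheory

theorem Matrix.charmatrix_blockDiagonal {m o R : Type*} [Fintype m] [DecidableEq m] [Fintype o]
    [DecidableEq o] [CommRing R] (M : o → Matrix m m R) :
    charmatrix (blockDiagonal M) = blockDiagonal fun k => charmatrix (M k) := by
  refine Matrix.ext fun ⟨i, k⟩ ⟨j, k'⟩ => ?_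
  rw [charmatrix_apply, blockDiagonal_apply, blockDiagonal_apply]
  split_ifs with hk
  · subst hk
    simp [charmatrix_apply, diagonal_apply]
  · simp [hk]

theorem Matrix.charpoly_blockDiagonal {m o R : Type*} [Fintype m] [DecidableEq m] [Fintype o]
    [DecidableEq o] [CommRing R] (M : o → Matrix m m R) :
    (blockDiagonal M).charpoly = ∏ k, (M k).charpoly := by
  rw [charpoly, charmatrix_blockDiagonal, det_blockDiagonal]
  rfl

theorem Matrix.IsHermitian.sum_comp_eigenvalues_eq_of_blockDiagonal {𝕜 n m o : Type*}
    [RCLike 𝕜] [Fintype n] [DecidableEq n] [Fintype m] [DecidableEq m] [Fintype o]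
    [DecidableEq o] {A : Matrix n n 𝕜} (hA : A.IsHermitian) {B : o → Matrix m m 𝕜}
    (hB : ∀ k, (B k).IsHermitian) (e : m × o ≃ n) (hAB : A.submatrix e e = blockDiagonal B)
    (f : ℝ → ℝ) :
    ∑ i, f (hA.eigenvalues i) = ∑ k, ∑ i, f ((hB k).eigenvalues i) := by
  have hroots : Multiset.map ((RCLike.ofReal : ℝ → 𝕜) ∘ hA.eigenvalues) Finset.univ.val =
      ∑ k, Multiset.map (RCLike.ofReal ∘ (hB k).eigenvalues) Finset.univ.val := by
    rw [← hA.roots_charpoly_eq_eigenvalues, ← charpoly_reindex e.symm, reindex_apply,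
      Equiv.symm_symm, hAB, charpoly_blockDiagonal, Polynomial.roots_prod _ _
        (Finset.prod_ne_zero_iff.mpr fun k _ => (charpoly_monic (B k)).ne_zero)]
    exact Finset.sum_congr rfl fun k _ => (hB k).roots_charpoly_eq_eigenvalues
  let sumMap :=
    Multiset.sumAddMonoidHom.comp (Multiset.mapAddMonoidHom (f ∘ RCLike.re (K := 𝕜)))
  have hsum := congrArg sumMap hroots
  rw [map_sum] at hsum
  simpa [sumMap, Multiset.map_map, Function.comp_def] using hsum

theorem ProbabilityTheory.iIndepFun.curry {ι κ Ω 𝓧 : Type*} {mΩ : MeasurableSpace Ω}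
    {m𝓧 : MeasurableSpace 𝓧} {P : Measure Ω} {Y : ι × κ → Ω → 𝓧}
    (hY : ∀ p, Measurable (Y p)) (h : iIndepFun Y P) :
    iIndepFun (fun i ω j => Y (i, j) ω) P := by
  have := h.isProbabilityMeasure
  have := fun p => Measure.isProbabilityMeasure_map (μ := P) (hY p).aemeasurable
  have hslice : ∀ i, P.map (fun ω j => Y (i, j) ω) =
      Measure.infinitePi fun j => P.map (Y (i, j)) :=
    fun i => (h.precomp (Prod.mk_right_injective i)).map_fun_eq_infinitePi_map fun j => hY (i, j)
  rw [iIndepFun_iff_map_fun_eq_infinitePi_map fun i => measurable_pi_lambda _ fun j => hY (i, j)]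
  simp_rw [hslice]
  rw [← Measure.infinitePi_map_curry (fun i j => P.map (Y (i, j))),
    ← h.map_fun_eq_infinitePi_map hY,
    Measure.map_map (MeasurableEquiv.measurable _) (measurable_pi_lambda _ hY)]
  rfl

theorem hdist_le_iff {x y r : ℕ} : hdist x y ≤ r ↔ x / 2 ^ r = y / 2 ^ r := by
  refine ⟨fun h => ?_, fun h => Nat.sInf_le h⟩
  have hne : {s | x / 2 ^ s = y / 2 ^ s}.Nonempty := ⟨x + y, by
    rw [Set.mem_ofPred_eq, Nat.div_eq_of_lt, Nat.div_eq_of_lt] <;>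
      exact Nat.lt_two_pow_self.trans_le (Nat.pow_le_pow_right two_pos (by omega))⟩
  have hmem : x / 2 ^ hdist x y = y / 2 ^ hdist x y := Nat.sInf_mem hne
  obtain ⟨d, rfl⟩ := Nat.exists_eq_add_of_le h
  rw [pow_add, ← Nat.div_div_eq_div_mul, ← Nat.div_div_eq_div_mul, hmem]

theorem hdist_add_mul_two_pow {j a b k : ℕ} (ha : a < 2 ^ k) (hb : b < 2 ^ k) :
    hdist (j * 2 ^ k + a) (j * 2 ^ k + b) = hdist a b := by
  have key : ∀ r ≤ k, hdist (j * 2 ^ k + a) (j * 2 ^ k + b) ≤ r ↔ hdist a b ≤ r := by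
    intro r hr
    have hsplit : j * 2 ^ k = 2 ^ r * (j * 2 ^ (k - r)) := by
      rw [mul_left_comm, ← pow_add, Nat.add_sub_cancel' hr]
    simp only [hdist_le_iff, hsplit, Nat.mul_add_div (Nat.two_pow_pos r), add_right_inj]
  have hab : hdist a b ≤ k := hdist_le_iff.2 (by rw [Nat.div_eq_of_lt ha, Nat.div_eq_of_lt hb])
  exact le_antisymm ((key _ hab).2 le_rfl) ((key _ ((key k le_rfl).2 hab)).1 le_rfl)

theorem lt_hdist_add_mul_two_pow {j j' a b k : ℕ} (ha : a < 2 ^ k) (hb : b < 2 ^ k)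
    (hj : j ≠ j') : k < hdist (j * 2 ^ k + a) (j' * 2 ^ k + b) := by
  rw [← not_le, hdist_le_iff, mul_comm j, mul_comm j', Nat.mul_add_div (Nat.two_pow_pos k),
    Nat.mul_add_div (Nat.two_pow_pos k), Nat.div_eq_of_lt ha, Nat.div_eq_of_lt hb]
  simpa using hj

namespace UltrametricField

abbrev EntryIdx (n : ℕ) : Type :=
  {p : ℕ × Fin (2 ^ n) × Fin (2 ^ n) // p.1 ≤ n ∧ (p.2.1 : ℕ) ≤ (p.2.2 : ℕ)}

def symmEntry {k : ℕ} (v : EntryIdx k → ℝ) (r : ℕ) (a b : Fin (2 ^ k)) : ℝ :=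
  if hr : r ≤ k then
    if hab : (a : ℕ) ≤ (b : ℕ) then v ⟨(r, a, b), hr, hab⟩
    else v ⟨(r, b, a), hr, le_of_not_ge hab⟩
  else 0

/-- `H_{k,m}` as a function of the independent entries of `(Φ_{k,r})_{r ≤ k}`. -/
noncomputable def ofEntries (c : ℝ) {k : ℕ} (m : ℕ) (v : EntryIdx k → ℝ) :
    Matrix (Fin (2 ^ k)) (Fin (2 ^ k)) ℝ :=
  Matrix.of fun a b =>
    ∑ r ∈ Finset.range (m + 1), (2 : ℝ) ^ (-((1 + c) / 2) * (r : ℝ)) * symmEntry v r a b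

theorem measurable_ofEntries (c : ℝ) (k m : ℕ) : Measurable (ofEntries c (k := k) m) := by
  refine measurable_pi_lambda _ fun a => measurable_pi_lambda _ fun b => ?_
  simp only [ofEntries, of_apply]
  refine Finset.measurable_sum _ fun r _ => Measurable.const_mul ?_ _
  unfold symmEntry
  split_ifs <;> first | exact measurable_pi_apply _ | exact measurable_const

theorem ofEntries_eq_sum {k : ℕ} (c : ℝ) {m : ℕ} (hm : m ≤ k)
    (M : ℕ → Matrix (Fin (2 ^ k)) (Fin (2 ^ k)) ℝ) (hM : ∀ r, (M r).IsHermitian) :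
    ofEntries c m (fun p : EntryIdx k => M p.1.1 p.1.2.1 p.1.2.2) =
      ∑ r ∈ Finset.range (m + 1), (2 : ℝ) ^ (-((1 + c) / 2) * (r : ℝ)) • M r := by
  refine Matrix.ext fun a b => ?_
  rw [ofEntries, of_apply, Matrix.sum_apply]
  refine Finset.sum_congr rfl fun r hr => ?_
  rw [Matrix.smul_apply, smul_eq_mul, symmEntry,
    dif_pos ((Finset.mem_range_succ_iff.1 hr).trans hm)]
  congr 1
  split_ifs
  · rfl
  · simpa using (hM r).apply a b

noncomputable def entryLaw (k : ℕ) : Measure (EntryIdx k → ℝ) :=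
  Measure.infinitePi fun p : EntryIdx k => gaussianReal 0 (entryVar p.1.1 p.1.2.1 p.1.2.2)

variable {Ω : Type*} [MeasureSpace Ω] (F : UltrametricField Ω)

def entries (n : ℕ) (ω : Ω) (p : EntryIdx n) : ℝ := F.Φ n p.1.1 ω p.1.2.1 p.1.2.2

theorem hasLaw_entries_comp {k n : ℕ} (g : EntryIdx k → EntryIdx n) (hg : g.Injective)
    (hvar : ∀ p, entryVar (g p).1.1 (g p).1.2.1 (g p).1.2.2 = entryVar p.1.1 p.1.2.1 p.1.2.2) :
    HasLaw (fun ω p => F.entries n ω (g p)) (entryLaw k) ℙ :=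
  ((F.indep n).precomp hg).hasLaw_infinitePi
    (fun p => ⟨(F.meas n _ _ _).aemeasurable, (F.gauss n _ (g p).2.1 _ _).trans (by rw [hvar])⟩)
    (measurable_pi_lambda _ fun _ => F.meas n _ _ _).aemeasurable

theorem Htrunc_apply (c : ℝ) (n m : ℕ) (ω : Ω) (x y : Fin (2 ^ n)) :
    F.Htrunc c n m ω x y =
      ∑ r ∈ Finset.range (m + 1), (2 : ℝ) ^ (-((1 + c) / 2) * (r : ℝ)) * F.Φ n r ω x y := by
  simp [Htrunc, Matrix.sum_apply]

theorem Htrunc_eq_ofEntries (c : ℝ) {k m : ℕ} (hm : m ≤ k) (ω : Ω) :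
    F.Htrunc c k m ω = ofEntries c m (F.entries k ω) :=
  (ofEntries_eq_sum c hm _ fun r => F.herm k r ω).symm

section Blocks

variable {n k : ℕ} (hkn : k ≤ n)

def blockEquiv : Fin (2 ^ k) × Fin (2 ^ (n - k)) ≃ Fin (2 ^ n) :=
  (Equiv.prodComm _ _).trans <| finProdFinEquiv.trans <|
    finCongr (by rw [← pow_add, Nat.sub_add_cancel hkn])

theorem blockEquiv_apply (a : Fin (2 ^ k)) (j : Fin (2 ^ (n - k))) :
    blockEquiv hkn (a, j) = blockIdx hkn j a :=
  Fin.ext <| by simp [blockEquiv, blockIdx, finProdFinEquiv, mul_comm, add_comm]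

theorem Htrunc_blockIdx_of_ne (c : ℝ) {m : ℕ} (hm : m ≤ k) (ω : Ω)
    {j j' : Fin (2 ^ (n - k))} (hj : j ≠ j') (a b : Fin (2 ^ k)) :
    F.Htrunc c n m ω (blockIdx hkn j a) (blockIdx hkn j' b) = 0 := by
  rw [Htrunc_apply]
  refine Finset.sum_eq_zero fun r hr => ?_
  rw [F.zero _ _ _ _ _ ((Finset.mem_range_succ_iff.1 hr).trans_lt <| hm.trans_lt <|
    lt_hdist_add_mul_two_pow a.isLt b.isLt (Fin.val_injective.ne hj)), mul_zero]

theorem Htrunc_submatrix_blockEquiv (c : ℝ) {m : ℕ} (hm : m ≤ k) (ω : Ω) :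
    (F.Htrunc c n m ω).submatrix (blockEquiv hkn) (blockEquiv hkn) =
      blockDiagonal fun j => F.blockMat c hkn m j ω := by
  refine Matrix.ext fun ⟨a, j⟩ ⟨b, j'⟩ => ?_
  rw [submatrix_apply, blockEquiv_apply, blockEquiv_apply, blockDiagonal_apply]
  split_ifs with hj
  · subst hj; rfl
  · exact F.Htrunc_blockIdx_of_ne hkn c hm ω hj a b

theorem nuTrunc_eq_sum_blockEig (c : ℝ) {m : ℕ} (hm : m ≤ k) (f : ℝ → ℝ) (ω : Ω) :
    F.nuTrunc c n m f ω = (2 ^ n : ℝ)⁻¹ * ∑ j, ∑ i, f (F.blockEig c hkn m j ω i) := by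
  rw [nuTrunc, eigTrunc, (F.isHermitian_Htrunc c n m ω).sum_comp_eigenvalues_eq_of_blockDiagonal
    (fun j => F.isHermitian_blockMat c hkn m j ω) _ (F.Htrunc_submatrix_blockEquiv hkn c hm ω)]
  rfl

def blockEntryIdx (j : Fin (2 ^ (n - k))) (p : EntryIdx k) : EntryIdx n :=
  ⟨(p.1.1, blockIdx hkn j p.1.2.1, blockIdx hkn j p.1.2.2),
    p.2.1.trans hkn, Nat.add_le_add_left p.2.2 _⟩

theorem blockEntryIdx_injective :
    (fun q : Fin (2 ^ (n - k)) × EntryIdx k => blockEntryIdx hkn q.1 q.2).Injective := by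
  rintro ⟨j, ⟨⟨r, a, b⟩, hp⟩⟩ ⟨j', ⟨⟨r', a', b'⟩, hp'⟩⟩ h
  simp only [blockEntryIdx, Subtype.mk.injEq, Prod.mk.injEq, ← blockEquiv_apply hkn,
    (blockEquiv hkn).injective.eq_iff] at h
  obtain ⟨rfl, ⟨rfl, rfl⟩, rfl, -⟩ := h
  rfl

theorem entryVar_blockEntryIdx (j : Fin (2 ^ (n - k))) (p : EntryIdx k) :
    entryVar (blockEntryIdx hkn j p).1.1 (blockEntryIdx hkn j p).1.2.1
      (blockEntryIdx hkn j p).1.2.2 = entryVar p.1.1 p.1.2.1 p.1.2.2 := by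
  simp only [entryVar, blockEntryIdx, blockIdx,
    hdist_add_mul_two_pow p.1.2.1.isLt p.1.2.2.isLt]

theorem blockMat_eq_ofEntries (c : ℝ) {m : ℕ} (hm : m ≤ k) (j : Fin (2 ^ (n - k))) (ω : Ω) :
    F.blockMat c hkn m j ω = ofEntries c m (fun p => F.entries n ω (blockEntryIdx hkn j p)) := by
  refine Eq.trans ?_ (ofEntries_eq_sum c hm
    (fun r => (F.Φ n r ω).submatrix (blockIdx hkn j) (blockIdx hkn j))
    fun r => (F.herm n r ω).submatrix _).symm
  ext a b
  simp [blockMat, Htrunc_apply, Matrix.sum_apply]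

theorem blockMat_pair_eq_ofEntries (c : ℝ) {m₁ m₂ : ℕ} (hm₁ : m₁ ≤ k) (hm₂ : m₂ ≤ k)
    (j : Fin (2 ^ (n - k))) :
    (fun ω => (F.blockMat c hkn m₁ j ω, F.blockMat c hkn m₂ j ω)) =
      (fun v => (ofEntries c m₁ v, ofEntries c m₂ v)) ∘
        fun ω p => F.entries n ω (blockEntryIdx hkn j p) :=
  funext fun ω => by
    rw [Function.comp_apply, F.blockMat_eq_ofEntries hkn c hm₁, F.blockMat_eq_ofEntries hkn c hm₂]

theorem iIndepFun_blockMat_pair (c : ℝ) {m₁ m₂ : ℕ} (hm₁ : m₁ ≤ k) (hm₂ : m₂ ≤ k) :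
    iIndepFun (fun j ω => (F.blockMat c hkn m₁ j ω, F.blockMat c hkn m₂ j ω)) ℙ := by
  rw [show (fun j ω => (F.blockMat c hkn m₁ j ω, F.blockMat c hkn m₂ j ω)) = _ from
    funext (F.blockMat_pair_eq_ofEntries hkn c hm₁ hm₂)]
  exact (((F.indep n).precomp (blockEntryIdx_injective hkn)).curry
    fun _ => F.meas n _ _ _).comp _
      fun _ => (measurable_ofEntries c k m₁).prodMk (measurable_ofEntries c k m₂)

theorem map_blockMat_pair (c : ℝ) {m₁ m₂ : ℕ} (hm₁ : m₁ ≤ k) (hm₂ : m₂ ≤ k)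
    (j : Fin (2 ^ (n - k))) :
    Measure.map (fun ω => (F.blockMat c hkn m₁ j ω, F.blockMat c hkn m₂ j ω)) ℙ =
      Measure.map (fun ω => (F.Htrunc c k m₁ ω, F.Htrunc c k m₂ ω)) ℙ := by
  have hG := (measurable_ofEntries c k m₁).prodMk (measurable_ofEntries c k m₂)
  have hblock := F.hasLaw_entries_comp (blockEntryIdx hkn j)
    ((blockEntryIdx_injective hkn).comp (Prod.mk_right_injective j))
    (entryVar_blockEntryIdx hkn j)
  have hsmall := F.hasLaw_entries_comp (k := k) id Function.injective_id fun _ => rfl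
  have hHtrunc : (fun ω => (F.Htrunc c k m₁ ω, F.Htrunc c k m₂ ω)) =
      (fun v => (ofEntries c m₁ v, ofEntries c m₂ v)) ∘ fun ω p => F.entries k ω (id p) :=
    funext fun ω => by
      rw [Function.comp_apply, F.Htrunc_eq_ofEntries c hm₁, F.Htrunc_eq_ofEntries c hm₂]
      rfl
  rw [F.blockMat_pair_eq_ofEntries hkn c hm₁ hm₂, hHtrunc,
    ← AEMeasurable.map_map_of_aemeasurable hG.aemeasurable hblock.aemeasurable, hblock.map_eq,
    ← AEMeasurable.map_map_of_aemeasurable hG.aemeasurable hsmall.aemeasurable, hsmall.map_eq]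

end Blocks

end UltrametricField

/-- The independent copies `(ν_k^{(j)}, ν_{k,k-1}^{(j)})` are realised as the density of states
of the `j`-th diagonal blocks of `(H_{n,k}, H_{n,k-1})`. -/
theorem telescopic_term_general {Ω : Type*} [MeasureSpace Ω]
    (F : UltrametricField Ω) (c : ℝ) {k n : ℕ} (hkn : k ≤ n)
    (z : ℂ) :
    (∀ ω : Ω, F.nuTrunc c n k (Pker z) ω - F.nuTrunc c n (k - 1) (Pker z) ω =
        (2 ^ (n - k) : ℝ)⁻¹ * ∑ j : Fin (2 ^ (n - k)),
          ((2 ^ k : ℝ)⁻¹ * ∑ i, Pker z (F.blockEig c hkn k j ω i) -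
            (2 ^ k : ℝ)⁻¹ * ∑ i, Pker z (F.blockEig c hkn (k - 1) j ω i))) ∧
    iIndepFun
      (fun (j : Fin (2 ^ (n - k))) (ω : Ω) =>
        (F.blockMat c hkn k j ω, F.blockMat c hkn (k - 1) j ω)) ℙ ∧
    (∀ j : Fin (2 ^ (n - k)),
        Measure.map (fun ω => (F.blockMat c hkn k j ω, F.blockMat c hkn (k - 1) j ω)) ℙ =
          Measure.map (fun ω => (F.Htrunc c k k ω, F.Htrunc c k (k - 1) ω)) ℙ) := by
  refine ⟨fun ω => ?_, F.iIndepFun_blockMat_pair hkn c le_rfl (Nat.sub_le k 1),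
    F.map_blockMat_pair hkn c le_rfl (Nat.sub_le k 1)⟩
  have hvol : (2 ^ n : ℝ)⁻¹ = (2 ^ (n - k) : ℝ)⁻¹ * (2 ^ k : ℝ)⁻¹ := by
    rw [← mul_inv, ← pow_add, Nat.sub_add_cancel hkn]
  rw [F.nuTrunc_eq_sum_blockEig hkn c le_rfl, F.nuTrunc_eq_sum_blockEig hkn c (Nat.sub_le k 1),
    hvol, Finset.sum_sub_distrib, ← Finset.mul_sum, ← Finset.mul_sum]
  ring

/-- **The telescopic term as an average of independent copies.** For any `0 < m < k ≤ n`
(here `m = k - 1`) and any `z ∈ ℂ₊`, the difference `ν_{n,k}(P_z) - ν_{n,k-1}(P_z)` equals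
`2^{-(n-k)} ∑_{j=1}^{2^{n-k}} (ν_k^{(j)}(P_z) - ν_{k,k-1}^{(j)}(P_z))`, where
`ν_k^{(j)}` and `ν_{k,k-1}^{(j)}` are the density of states measures of the `j`-th diagonal
blocks (at scale `k`) of `H_{n,k}` and `H_{n,k-1}`; the pairs of blocks are independent over
`j` and each pair is distributed as `(H_k, H_{k,k-1})`, so that the pairs
`(ν_k^{(j)}, ν_{k,k-1}^{(j)})` are independent and each is distributed as the pair
`(ν_k, ν_{k,k-1})` of an independent copy of `(H_k, H_{k,k-1})`. -/
theorem telescopic_term {Ω : Type*} [MeasureSpace Ω] [IsProbabilityMeasure (ℙ : Measure Ω)]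
    (F : UltrametricField Ω) (c : ℝ) {k n : ℕ} (hk : 0 < k) (hkn : k ≤ n)
    (z : ℂ) (hz : 0 < z.im) :
    (∀ ω : Ω, F.nuTrunc c n k (Pker z) ω - F.nuTrunc c n (k - 1) (Pker z) ω =
        (2 ^ (n - k) : ℝ)⁻¹ * ∑ j : Fin (2 ^ (n - k)),
          ((2 ^ k : ℝ)⁻¹ * ∑ i, Pker z (F.blockEig c hkn k j ω i) -
            (2 ^ k : ℝ)⁻¹ * ∑ i, Pker z (F.blockEig c hkn (k - 1) j ω i))) ∧
    iIndepFun
      (fun (j : Fin (2 ^ (n - k))) (ω : Ω) =>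
        (F.blockMat c hkn k j ω, F.blockMat c hkn (k - 1) j ω)) ℙ ∧
    (∀ j : Fin (2 ^ (n - k)),
        Measure.map (fun ω => (F.blockMat c hkn k j ω, F.blockMat c hkn (k - 1) j ω)) ℙ =
          Measure.map (fun ω => (F.Htrunc c k k ω, F.Htrunc c k (k - 1) ω)) ℙ) :=
  telescopic_term_general F c hkn z
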